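/- arXiv:1905.13168 — 5 statements merged into one kernel-verified Lean document; each statement's English description precedes it below -/
import Mathlib

section
/- Let n ≥ 1, let Σ and Σ' be n×n real positive definite matrices, and let X be a random vector in ℝⁿ distributed according to the multivariate Gaussian distribution N(0, Σ'). Let λ₁, …, λₙ be the eigenvalues (with multiplicity) of the symmetric positive definite matrix (Σ')^{1/2} Σ^{-1} (Σ')^{1/2}. Then there exist random variables v₁, …, vₙ and u₁, …, uₙ, each distributed as χ²(1), such that almost surely Xᵀ Σ^{-1} X − Xᵀ (Σ')^{-1} X = ∑_{i=1}^n λᵢ uᵢ − ∑_{i=1}^n vᵢ. -/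
open Matrix MeasureTheory ProbabilityTheory

/-- The square root of a positive semidefinite matrix, with its definition from the older
Mathlib (removed since), specialized to real matrices. -/
noncomputable def Matrix.PosSemidef.sqrt {n : Type*} [Fintype n] [DecidableEq n]
    {A : Matrix n n ℝ} (hA : A.PosSemidef) : Matrix n n ℝ :=
  hA.1.eigenvectorUnitary.1 * diagonal ((↑) ∘ (√·) ∘ hA.1.eigenvalues) *
  (star hA.1.eigenvectorUnitary : Matrix n n ℝ)

lemma Matrix.PosSemidef.isHermitian_sqrt {n : Type*} [Fintype n] [DecidableEq n]
    {A : Matrix n n ℝ} (hA : A.PosSemidef) : hA.sqrt.IsHermitian := by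
  simp only [IsHermitian, Matrix.PosSemidef.sqrt, conjTranspose_mul, diagonal_conjTranspose,
    Matrix.mul_assoc]
  congr 2
  all_goals first | (ext i j; simp [diagonal_apply]) | simp

/-- The chi-squared distribution with one degree of freedom: the law of the square of a
standard normal random variable. -/
noncomputable def chiSqOne : Measure ℝ := (gaussianReal 0 1).map fun x => x ^ 2

/-- The standard multivariate Gaussian `N(0, Iₙ)` on `ℝⁿ`, as the product of `n` standard
real Gaussians. -/
noncomputable def stdGaussianPi (n : ℕ) : Measure (Fin n → ℝ) :=
  Measure.pi fun _ => gaussianReal 0 1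

/-- The multivariate Gaussian `N(0, Σ)` for a positive definite covariance matrix `Σ`,
defined as the law of `Σ^{1/2} Y` with `Y ~ N(0, Iₙ)`. -/
noncomputable def gaussianOfPosDef {n : ℕ} {S : Matrix (Fin n) (Fin n) ℝ} (hS : S.PosDef) :
    Measure (Fin n → ℝ) :=
  (stdGaussianPi n).map fun y => hS.posSemidef.sqrt.mulVec y

/-- For positive definite `Σ'`, `Σ`, the matrix `(Σ')^{1/2} Σ⁻¹ (Σ')^{1/2}` is symmetric. -/
lemma isHermitian_sqrt_mul_inv_mul_sqrt {n : ℕ} {S S' : Matrix (Fin n) (Fin n) ℝ}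
    (hS : S.PosDef) (hS' : S'.PosDef) :
    (hS'.posSemidef.sqrt * S⁻¹ * hS'.posSemidef.sqrt).IsHermitian := by
  have h := Matrix.isHermitian_mul_mul_conjTranspose hS'.posSemidef.sqrt hS.1.inv
  rwa [hS'.posSemidef.isHermitian_sqrt.eq] at h

/-!
Write `X = Q Z` with `Q = (Σ')^{1/2}`, so that `Z = Q⁻¹ X` is standard Gaussian. Since
`Q (Σ')⁻¹ Q = 1`, the second quadratic form is `‖Z‖²`; the first is `Zᵀ M Z` with
`M = Q Σ⁻¹ Q`, which in an orthonormal eigenbasis `(bᵢ)` of `M` reads `∑ λᵢ ⟪bᵢ, Z⟫²`. The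
coordinates of a standard Gaussian vector in any orthonormal basis are again standard Gaussian
(rotation invariance), so `vᵢ = Zᵢ²` and `uᵢ = ⟪bᵢ, Z⟫²` are `χ²(1)`.
-/

namespace Matrix

variable {ι : Type*} [Fintype ι]

lemma dotProduct_mulVec_conj {R : Type*} [CommSemiring R] (A B : Matrix ι ι R) (z : ι → R) :
    A *ᵥ z ⬝ᵥ B *ᵥ (A *ᵥ z) = z ⬝ᵥ (Aᵀ * B * A) *ᵥ z := by
  rw [dotProduct_mulVec, dotProduct_mulVec, dotProduct_mulVec z, vecMul_vecMul,
    ← vecMul_transpose, vecMul_vecMul, Matrix.mul_assoc]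

variable [DecidableEq ι]

lemma PosSemidef.sqrt_mul_self {A : Matrix ι ι ℝ} (hA : A.PosSemidef) :
    hA.sqrt * hA.sqrt = A := by
  have hsqrt : hA.sqrt = Unitary.conjStarAlgAut ℝ _ hA.1.eigenvectorUnitary
      (diagonal fun i => √(hA.1.eigenvalues i)) := rfl
  conv_rhs => rw [hA.1.spectral_theorem]
  rw [hsqrt, ← map_mul, diagonal_mul_diagonal]
  congr 2
  funext i
  simp [Real.mul_self_sqrt (hA.eigenvalues_nonneg i)]

lemma PosSemidef.transpose_sqrt {A : Matrix ι ι ℝ} (hA : A.PosSemidef) :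
    hA.sqrtᵀ = hA.sqrt := by
  simpa using hA.isHermitian_sqrt.eq

lemma PosDef.isUnit_det_sqrt {A : Matrix ι ι ℝ} (hA : A.PosDef) :
    IsUnit hA.posSemidef.sqrt.det := by
  refine isUnit_iff_ne_zero.mpr fun h => hA.det_pos.ne' ?_
  rw [← hA.posSemidef.sqrt_mul_self, det_mul, h, zero_mul]

lemma PosDef.sqrt_mul_inv_mul_sqrt {A : Matrix ι ι ℝ} (hA : A.PosDef) :
    hA.posSemidef.sqrt * A⁻¹ * hA.posSemidef.sqrt = 1 := by
  set Q := hA.posSemidef.sqrt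
  have hQ : IsUnit Q.det := hA.isUnit_det_sqrt
  calc Q * A⁻¹ * Q = Q * (Q * Q)⁻¹ * Q := by rw [hA.posSemidef.sqrt_mul_self]
    _ = 1 := by rw [mul_inv_rev, Matrix.mul_assoc, Matrix.mul_assoc, nonsing_inv_mul _ hQ,
      Matrix.mul_one, mul_nonsing_inv _ hQ]

lemma IsHermitian.dotProduct_mulVec_eq_sum_eigenvalues {A : Matrix ι ι ℝ} (hA : A.IsHermitian)
    (x : ι → ℝ) :
    x ⬝ᵥ A *ᵥ x = ∑ i, hA.eigenvalues i *
      hA.eigenvectorBasis.repr (WithLp.toLp 2 x : EuclideanSpace ℝ ι) i ^ 2 := by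
  let c := hA.eigenvectorBasis.repr (WithLp.toLp 2 x : EuclideanSpace ℝ ι)
  have hx : x = ∑ i, c i • ⇑(hA.eigenvectorBasis i) := by
    simpa using congrArg WithLp.ofLp (hA.eigenvectorBasis.sum_repr (WithLp.toLp 2 x)).symm
  have hcoord (i : ι) : x ⬝ᵥ ⇑(hA.eigenvectorBasis i) = c i := by
    rw [OrthonormalBasis.repr_apply_apply, EuclideanSpace.inner_eq_star_dotProduct]
    simp
  nth_rw 2 [hx]
  simp only [mulVec_sum, mulVec_smul, dotProduct_sum, dotProduct_smul, smul_eq_mul]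
  refine Finset.sum_congr rfl fun i _ => ?_
  rw [hA.mulVec_eigenvectorBasis, dotProduct_smul, hcoord, smul_eq_mul]
  ring

end Matrix

section

variable {n : ℕ}

lemma hasLaw_sq_gaussianReal : HasLaw (fun x : ℝ => x ^ 2) chiSqOne (gaussianReal 0 1) :=
  ⟨by fun_prop, rfl⟩

lemma hasLaw_eval_stdGaussianPi (i : Fin n) :
    HasLaw (fun x => x i) (gaussianReal 0 1) (stdGaussianPi n) :=
  (measurePreserving_eval (fun _ : Fin n => gaussianReal 0 1) i).hasLaw

lemma hasLaw_eval_stdGaussian {ι : Type*} [Fintype ι] (i : ι) :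
    HasLaw (fun x : EuclideanSpace ℝ ι => x i) (gaussianReal 0 1)
      (stdGaussian (EuclideanSpace ℝ ι)) := by
  rw [← map_pi_eq_stdGaussian]
  refine ⟨by fun_prop, ?_⟩
  rw [Measure.map_map (by fun_prop) (by fun_prop)]
  exact (measurePreserving_eval _ i).map_eq

lemma hasLaw_repr_stdGaussianPi {ι : Type*} [Fintype ι]
    (b : OrthonormalBasis ι ℝ (EuclideanSpace ℝ (Fin n))) (i : ι) :
    HasLaw (fun x => b.repr (WithLp.toLp 2 x) i) (gaussianReal 0 1) (stdGaussianPi n) := by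
  have hToLp :
      HasLaw (WithLp.toLp 2) (stdGaussian (EuclideanSpace ℝ (Fin n))) (stdGaussianPi n) :=
    ⟨by fun_prop, map_pi_eq_stdGaussian⟩
  have hRepr : HasLaw b.repr (stdGaussian (EuclideanSpace ℝ ι)) (stdGaussian _) :=
    ⟨by fun_prop, stdGaussian_map b.repr⟩
  exact (hasLaw_eval_stdGaussian i).comp (hRepr.comp hToLp)

lemma hasLaw_inv_sqrt_mulVec_gaussianOfPosDef {S : Matrix (Fin n) (Fin n) ℝ} (hS : S.PosDef) :
    HasLaw (hS.posSemidef.sqrt⁻¹ *ᵥ ·) (stdGaussianPi n) (gaussianOfPosDef hS) := by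
  refine ⟨by fun_prop, ?_⟩
  rw [gaussianOfPosDef, Measure.map_map (by fun_prop) (by fun_prop)]
  simp [Function.comp_def, mulVec_mulVec, nonsing_inv_mul _ hS.isUnit_det_sqrt]

end

lemma dotProduct_inv_mulVec_sub_eq_sum_of_eq_sqrt_mulVec {n : ℕ}
    {S S' : Matrix (Fin n) (Fin n) ℝ} (hS : S.PosDef) (hS' : S'.PosDef)
    {x z : Fin n → ℝ} (hx : x = hS'.posSemidef.sqrt *ᵥ z) :
    x ⬝ᵥ S⁻¹ *ᵥ x - x ⬝ᵥ S'⁻¹ *ᵥ x =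
      ∑ i, (isHermitian_sqrt_mul_inv_mul_sqrt hS hS').eigenvalues i *
        (isHermitian_sqrt_mul_inv_mul_sqrt hS hS').eigenvectorBasis.repr (WithLp.toLp 2 z) i ^ 2
      - ∑ i, z i ^ 2 := by
  rw [hx, dotProduct_mulVec_conj, dotProduct_mulVec_conj, hS'.posSemidef.transpose_sqrt,
    hS'.sqrt_mul_inv_mul_sqrt, one_mulVec,
    (isHermitian_sqrt_mul_inv_mul_sqrt hS hS').dotProduct_mulVec_eq_sum_eigenvalues]
  simp only [dotProduct, sq]

theorem glrt_decomposition_alternative_general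
    {Ω : Type*} [MeasurableSpace Ω] (P : Measure Ω)
    {n : ℕ} (S S' : Matrix (Fin n) (Fin n) ℝ)
    (hS : S.PosDef) (hS' : S'.PosDef)
    (X : Ω → Fin n → ℝ) (hX : Measurable X)
    (hXdist : P.map X = gaussianOfPosDef hS') :
    ∃ v u : Fin n → Ω → ℝ,
      (∀ i, P.map (v i) = chiSqOne) ∧ (∀ i, P.map (u i) = chiSqOne) ∧
      ∀ᵐ ω ∂P,
        X ω ⬝ᵥ S⁻¹.mulVec (X ω) - X ω ⬝ᵥ S'⁻¹.mulVec (X ω)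
          = ∑ i, (isHermitian_sqrt_mul_inv_mul_sqrt hS hS').eigenvalues i * u i ω
            - ∑ i, v i ω := by
  let Z : Ω → Fin n → ℝ := fun ω => hS'.posSemidef.sqrt⁻¹ *ᵥ X ω
  have hZ : HasLaw Z (stdGaussianPi n) P :=
    (hasLaw_inv_sqrt_mulVec_gaussianOfPosDef hS').comp ⟨hX.aemeasurable, hXdist⟩
  have hXZ (ω : Ω) : X ω = hS'.posSemidef.sqrt *ᵥ Z ω := by
    simp [Z, mulVec_mulVec, mul_nonsing_inv _ hS'.isUnit_det_sqrt]
  let b := (isHermitian_sqrt_mul_inv_mul_sqrt hS hS').eigenvectorBasis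
  refine ⟨fun i ω => Z ω i ^ 2, fun i ω => b.repr (WithLp.toLp 2 (Z ω)) i ^ 2,
    fun i => (hasLaw_sq_gaussianReal.comp ((hasLaw_eval_stdGaussianPi i).comp hZ)).map_eq,
    fun i => (hasLaw_sq_gaussianReal.comp ((hasLaw_repr_stdGaussianPi b i).comp hZ)).map_eq,
    Filter.Eventually.of_forall fun ω =>
      dotProduct_inv_mulVec_sub_eq_sum_of_eq_sqrt_mulVec hS hS' (hXZ ω)⟩

/-- **Theorem 2 of the paper.** Under the alternative hypothesis, i.e. `X ~ N(0, Σ')`, the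
quadratic-form part of the generalized likelihood ratio decomposes as
`XᵀΣ⁻¹X − Xᵀ(Σ')⁻¹X = ∑ᵢ λᵢ uᵢ − ∑ᵢ vᵢ` almost surely, where `λ₁, …, λₙ` are the
eigenvalues of `(Σ')^{1/2} Σ⁻¹ (Σ')^{1/2}` and the `uᵢ, vᵢ` are `χ²(1)`-distributed. -/
theorem glrt_decomposition_alternative
    {Ω : Type*} [MeasurableSpace Ω] (P : Measure Ω) [IsProbabilityMeasure P]
    {n : ℕ} (hn : 1 ≤ n) (S S' : Matrix (Fin n) (Fin n) ℝ)
    (hS : S.PosDef) (hS' : S'.PosDef)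
    (X : Ω → Fin n → ℝ) (hX : Measurable X)
    (hXdist : P.map X = gaussianOfPosDef hS') :
    ∃ v u : Fin n → Ω → ℝ,
      (∀ i, P.map (v i) = chiSqOne) ∧ (∀ i, P.map (u i) = chiSqOne) ∧
      ∀ᵐ ω ∂P,
        X ω ⬝ᵥ S⁻¹.mulVec (X ω) - X ω ⬝ᵥ S'⁻¹.mulVec (X ω)
          = ∑ i, (isHermitian_sqrt_mul_inv_mul_sqrt hS hS').eigenvalues i * u i ω
            - ∑ i, v i ω :=
  glrt_decomposition_alternative_general P S S' hS hS' X hX hXdist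
end

section
/- Let n ≥ 1, let Σ and Σ' be n×n real positive definite matrices, let V > 0, and let X be a random vector in ℝⁿ such that almost surely X_i ∈ [−V, V] for all i ∈ {1, …, n}. Let Q = Xᵀ(Σ^{-1} − (Σ')^{-1})X and C = 1/λ_min(Σ) + 1/λ_min(Σ'). Then Q − E[Q] is (C V² n / 2)-subgaussian, i.e., E[exp(s(Q − E[Q]))] ≤ exp(s² (C V² n / 2)² / 2) for all s ∈ ℝ. -/
/-!
In the Loewner order `0 ≤ Σ⁻¹ ≤ λ_min(Σ)⁻¹ • 1`, because the spectrum of `Σ⁻¹` consists of the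
inverses of the eigenvalues of `Σ`. Hence for `‖X‖² ≤ n V²` the statistic
`Q = XᵀΣ⁻¹X − Xᵀ(Σ')⁻¹X` lies in `[-n V² / λ_min(Σ'), n V² / λ_min(Σ)]`, an interval of width
`C V² n`, and Hoeffding's lemma makes `Q − E[Q]` subgaussian with parameter half that width.
-/

open Matrix MeasureTheory

/-- The smallest eigenvalue of a real symmetric matrix, as the infimum of its spectrum. -/
noncomputable def lamMin {n : ℕ} (M : Matrix (Fin n) (Fin n) ℝ) : ℝ := sInf (spectrum ℝ M)

open ProbabilityTheory
open scoped MatrixOrder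

namespace Matrix

variable {n : ℕ}

theorem lamMin_le_of_mem_spectrum {M : Matrix (Fin n) (Fin n) ℝ} {x : ℝ}
    (hx : x ∈ spectrum ℝ M) : lamMin M ≤ x :=
  csInf_le M.finite_real_spectrum.bddBelow hx

theorem PosDef.lamMin_pos (hn : 1 ≤ n) {M : Matrix (Fin n) (Fin n) ℝ} (hM : M.PosDef) :
    0 < lamMin M := by
  have : Nonempty (Fin n) := ⟨⟨0, hn⟩⟩
  have hspec := hM.1.spectrum_real_eq_range_eigenvalues
  obtain ⟨i, hi⟩ : lamMin M ∈ Set.range hM.1.eigenvalues :=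
    hspec ▸ (hspec ▸ Set.range_nonempty _).csInf_mem M.finite_real_spectrum
  exact hi ▸ hM.eigenvalues_pos i

theorem PosDef.inv_le_algebraMap_inv_lamMin (hn : 1 ≤ n) {S : Matrix (Fin n) (Fin n) ℝ}
    (hS : S.PosDef) : S⁻¹ ≤ algebraMap ℝ _ (lamMin S)⁻¹ := by
  rw [le_algebraMap_iff_spectrum_le hS.inv.isHermitian]
  intro x hx
  have hlam := hS.lamMin_pos hn
  obtain ⟨u, rfl⟩ := hS.isUnit
  rw [← coe_units_inv, ← spectrum.map_inv] at hx
  have hle : lamMin (u : Matrix (Fin n) (Fin n) ℝ) ≤ x⁻¹ := lamMin_le_of_mem_spectrum hx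
  exact (le_inv_comm₀ (inv_pos.mp (hlam.trans_le hle)) hlam).mpr hle

theorem dotProduct_mulVec_le_of_le_algebraMap {ι : Type*} [Fintype ι] [DecidableEq ι]
    {M : Matrix ι ι ℝ} {r : ℝ} (h : M ≤ algebraMap ℝ _ r) (x : ι → ℝ) :
    x ⬝ᵥ M *ᵥ x ≤ r * (x ⬝ᵥ x) := by
  simpa only [star_trivial, Algebra.algebraMap_eq_smul_one, sub_mulVec, smul_mulVec, one_mulVec,
    dotProduct_sub, dotProduct_smul, smul_eq_mul, sub_nonneg] using
    (le_iff.mp h).dotProduct_mulVec_nonneg x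

theorem dotProduct_self_le_of_forall_mem_Icc {ι : Type*} [Fintype ι] {x : ι → ℝ} {V : ℝ}
    (hx : ∀ i, x i ∈ Set.Icc (-V) V) : x ⬝ᵥ x ≤ Fintype.card ι * V ^ 2 :=
  calc x ⬝ᵥ x = ∑ i, x i ^ 2 := by simp only [dotProduct, sq]
    _ ≤ ∑ _i : ι, V ^ 2 := Finset.sum_le_sum fun i _ => sq_le_sq' (hx i).1 (hx i).2
    _ = Fintype.card ι * V ^ 2 := by simp

theorem dotProduct_sub_inv_mulVec_mem_Icc (hn : 1 ≤ n) {S S' : Matrix (Fin n) (Fin n) ℝ}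
    (hS : S.PosDef) (hS' : S'.PosDef) {R : ℝ} {x : Fin n → ℝ} (hx : x ⬝ᵥ x ≤ R) :
    x ⬝ᵥ (S⁻¹ - S'⁻¹) *ᵥ x ∈ Set.Icc (-((lamMin S')⁻¹ * R)) ((lamMin S)⁻¹ * R) := by
  have h_upper : S⁻¹ - S'⁻¹ ≤ algebraMap ℝ _ (lamMin S)⁻¹ :=
    (sub_le_self _ hS'.inv.posSemidef.nonneg).trans (hS.inv_le_algebraMap_inv_lamMin hn)
  have h_lower : -(S⁻¹ - S'⁻¹) ≤ algebraMap ℝ _ (lamMin S')⁻¹ := by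
    rw [neg_sub]
    exact (sub_le_self _ hS.inv.posSemidef.nonneg).trans (hS'.inv_le_algebraMap_inv_lamMin hn)
  have hinv := inv_pos.mpr (hS.lamMin_pos hn)
  have hinv' := inv_pos.mpr (hS'.lamMin_pos hn)
  have hneg := dotProduct_mulVec_le_of_le_algebraMap h_lower x
  rw [neg_mulVec, dotProduct_neg] at hneg
  constructor
  · nlinarith
  · nlinarith [dotProduct_mulVec_le_of_le_algebraMap h_upper x]

end Matrix

theorem integral_exp_mul_sub_integral_le_of_mem_Icc {Ω : Type*} [MeasurableSpace Ω]
    {P : Measure Ω} [IsProbabilityMeasure P] {Y : Ω → ℝ} (hY : AEMeasurable Y P) {a b : ℝ}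
    (hbdd : ∀ᵐ ω ∂P, Y ω ∈ Set.Icc a b) (s : ℝ) :
    ∫ ω, Real.exp (s * (Y ω - ∫ ω', Y ω' ∂P)) ∂P ≤ Real.exp (s ^ 2 * ((b - a) / 2) ^ 2 / 2) := by
  obtain ⟨ω, hω⟩ := hbdd.exists
  have := (hasSubgaussianMGF_of_mem_Icc hY hbdd).mgf_le s
  rw [NNReal.coe_pow, NNReal.coe_div, coe_nnnorm, Real.norm_of_nonneg (sub_nonneg.mpr
    (hω.1.trans hω.2))] at this
  simpa only [mgf, NNReal.coe_ofNat, mul_comm] using this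

theorem centered_quadratic_statistic_subgaussian_general
    {Ω : Type*} [MeasurableSpace Ω] (P : Measure Ω) [IsProbabilityMeasure P]
    {n : ℕ} (hn : 1 ≤ n) (S S' : Matrix (Fin n) (Fin n) ℝ)
    (hS : S.PosDef) (hS' : S'.PosDef)
    (V : ℝ)
    (X : Ω → Fin n → ℝ) (hX : Measurable X)
    (hbdd : ∀ᵐ ω ∂P, ∀ i, X ω i ∈ Set.Icc (-V) V) :
    ∀ s : ℝ,
      ∫ ω, Real.exp (s * (X ω ⬝ᵥ (S⁻¹ - S'⁻¹).mulVec (X ω)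
          - ∫ ω', X ω' ⬝ᵥ (S⁻¹ - S'⁻¹).mulVec (X ω') ∂P)) ∂P
        ≤ Real.exp (s ^ 2 *
            ((1 / lamMin S + 1 / lamMin S') * V ^ 2 * n / 2) ^ 2 / 2) := by
  intro s
  have hQ : Measurable fun ω => X ω ⬝ᵥ (S⁻¹ - S'⁻¹) *ᵥ X ω := by fun_prop
  have hQ_mem : ∀ᵐ ω ∂P, X ω ⬝ᵥ (S⁻¹ - S'⁻¹) *ᵥ X ω ∈
      Set.Icc (-((lamMin S')⁻¹ * (n * V ^ 2))) ((lamMin S)⁻¹ * (n * V ^ 2)) := by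
    filter_upwards [hbdd] with ω hω
    refine dotProduct_sub_inv_mulVec_mem_Icc hn hS hS' ?_
    simpa only [Fintype.card_fin] using dotProduct_self_le_of_forall_mem_Icc hω
  convert integral_exp_mul_sub_integral_le_of_mem_Icc hQ.aemeasurable hQ_mem s using 5
  ring

/-- **Lemma 2 of the paper.** For a random vector `X` with entries almost surely in `[-V, V]`
and positive definite `Σ`, `Σ'`, the centered quadratic statistic
`Q − E[Q]` with `Q = Xᵀ(Σ⁻¹ − (Σ')⁻¹)X` is `(C V² n / 2)`-subgaussian, where
`C = 1/λ_min(Σ) + 1/λ_min(Σ')`. -/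
theorem centered_quadratic_statistic_subgaussian
    {Ω : Type*} [MeasurableSpace Ω] (P : Measure Ω) [IsProbabilityMeasure P]
    {n : ℕ} (hn : 1 ≤ n) (S S' : Matrix (Fin n) (Fin n) ℝ)
    (hS : S.PosDef) (hS' : S'.PosDef)
    (V : ℝ) (hV : 0 < V)
    (X : Ω → Fin n → ℝ) (hX : Measurable X)
    (hbdd : ∀ᵐ ω ∂P, ∀ i, X ω i ∈ Set.Icc (-V) V) :
    ∀ s : ℝ,
      ∫ ω, Real.exp (s * (X ω ⬝ᵥ (S⁻¹ - S'⁻¹).mulVec (X ω)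
          - ∫ ω', X ω' ⬝ᵥ (S⁻¹ - S'⁻¹).mulVec (X ω') ∂P)) ∂P
        ≤ Real.exp (s ^ 2 *
            ((1 / lamMin S + 1 / lamMin S') * V ^ 2 * n / 2) ^ 2 / 2) :=
  centered_quadratic_statistic_subgaussian_general P hn S S' hS hS' V X hX hbdd
end

section
/- Let n ≥ 1, δ ∈ (0, 1), V > 0. Let Σ be an n×n real positive definite matrix and, for each t ∈ {1, …, n}, let Σ'_t be an n×n real positive definite matrix. Let C₀ be a real number with C₀ ≥ 1/λ_min(Σ) + 1/λ_min(Σ'_t) for all t. Let X be a random vector in ℝⁿ with E[X] = 0, covariance matrix Σ, and almost surely X_i ∈ [−V, V] for all i. For each t let Z_t = XᵀΣ^{-1}X − Xᵀ(Σ'_t)^{-1}X + ln(det Σ / det Σ'_t), and let 2𝔏 = max_{t ∈ {1,…,n}} Z_t. Then P( 2𝔏 ≥ max_t ( n − Tr(Σ (Σ'_t)^{-1}) + ln(det Σ / det Σ'_t) ) + C₀ V² n √(0.5 · ln(2n/δ)) ) ≤ δ/2. -/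
/-! Write `Z_t = W_t + ln(det Σ / det Σ'_t)` with `W_t = XᵀΣ⁻¹X − Xᵀ(Σ'_t)⁻¹X`. Since
`E[XᵀAX] = Tr(AΣ)`, the mean of `W_t` is `n − Tr(Σ(Σ'_t)⁻¹)`; and the Rayleigh bound
`xᵀM⁻¹x ≤ ‖x‖² / λ_min(M)` together with `‖X‖² ≤ nV²` confines `W_t` to an interval of length
`C₀V²n`. Hoeffding's inequality bounds the probability that `W_t` exceeds its mean by
`C₀V²n √(ln(2n/δ)/2)` by `δ/(2n)`, and a union bound over the alternatives, applied at a
maximiser of `t ↦ Z_t`, gives `δ/2`. -/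

open Matrix MeasureTheory

open ProbabilityTheory Real

section Hoeffding

variable {Ω : Type*} [MeasurableSpace Ω] {P : Measure Ω} [IsProbabilityMeasure P] {Y : Ω → ℝ}

theorem measure_integral_add_le_le_of_mem_Icc (hY : AEMeasurable Y P) {a b : ℝ}
    (hb : ∀ᵐ ω ∂P, Y ω ∈ Set.Icc a b) {ε : ℝ} (hε : 0 ≤ ε) :
    P {ω | (∫ ω', Y ω' ∂P) + ε ≤ Y ω} ≤ ENNReal.ofReal (exp (-(2 * ε ^ 2 / (b - a) ^ 2))) := by
  have hoeffding := (hasSubgaussianMGF_of_mem_Icc hY hb).measure_ge_le hε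
  rw [← ofReal_measureReal]
  refine ENNReal.ofReal_le_ofReal ?_
  convert hoeffding using 3
  · simp only [le_sub_iff_add_le']
  · push_cast
    rw [Real.norm_eq_abs, div_pow, sq_abs]
    generalize (b - a) ^ 2 = d
    ring

theorem measure_integral_add_mul_sqrt_le_of_mem_Icc (hY : AEMeasurable Y P) {a R : ℝ}
    (hR : 0 < R) (hb : ∀ᵐ ω ∂P, Y ω ∈ Set.Icc a (a + R)) {L : ℝ} (hL : 0 ≤ L) :
    P {ω | (∫ ω', Y ω' ∂P) + R * √(0.5 * L) ≤ Y ω} ≤ ENNReal.ofReal (exp (-L)) := by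
  refine (measure_integral_add_le_le_of_mem_Icc hY hb (by positivity)).trans_eq ?_
  rw [add_sub_cancel_left, mul_pow, sq_sqrt (by positivity)]
  field_simp
  norm_num

end Hoeffding

section SmallestEigenvalue

variable {n : ℕ}

theorem lamMin_mul_dotProduct_le {M : Matrix (Fin n) (Fin n) ℝ} (hM : M.IsHermitian)
    (x : Fin n → ℝ) : lamMin M * (x ⬝ᵥ x) ≤ x ⬝ᵥ M *ᵥ x := by
  have hle : ∀ μ ∈ spectrum ℝ M, lamMin M ≤ μ := fun μ hμ =>
    csInf_le (hM.spectrum_real_eq_range_eigenvalues ▸ (Set.finite_range _).bddBelow) hμ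
  have hpsd : (M - algebraMap ℝ _ (lamMin M)).PosSemidef := by
    refine posSemidef_iff_isHermitian_and_spectrum_nonneg.2 ⟨?_, ?_⟩
    · exact hM.sub (isHermitian_diagonal_of_self_adjoint _ (by ext; simp))
    · rw [← spectrum.sub_singleton_eq]
      rintro _ ⟨μ, hμ, _, rfl, rfl⟩
      exact sub_nonneg.2 (hle μ hμ)
  have := hpsd.dotProduct_mulVec_nonneg x
  rwa [star_trivial, sub_mulVec, dotProduct_sub, Algebra.algebraMap_eq_smul_one, smul_mulVec,
    one_mulVec, dotProduct_smul, smul_eq_mul, sub_nonneg] at this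

theorem lamMin_pos [NeZero n] {M : Matrix (Fin n) (Fin n) ℝ} (hM : M.PosDef) :
    0 < lamMin M := by
  obtain ⟨i, hi⟩ : lamMin M ∈ Set.range hM.1.eigenvalues := by
    rw [lamMin, hM.1.spectrum_real_eq_range_eigenvalues]
    exact (Set.range_nonempty _).csInf_mem (Set.finite_range _)
  exact hi ▸ hM.eigenvalues_pos i

theorem dotProduct_inv_mulVec_le {M : Matrix (Fin n) (Fin n) ℝ} (hM : M.PosDef)
    (hlam : 0 < lamMin M) (x : Fin n → ℝ) : x ⬝ᵥ M⁻¹ *ᵥ x ≤ (x ⬝ᵥ x) / lamMin M := by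
  set y := M⁻¹ *ᵥ x
  have hMy : M *ᵥ y = x := by
    rw [mulVec_mulVec, mul_nonsing_inv _ (isUnit_iff_ne_zero.mpr hM.det_pos.ne'), one_mulVec]
  have hrayleigh : lamMin M * (y ⬝ᵥ y) ≤ x ⬝ᵥ y := by
    simpa [hMy, dotProduct_comm y x] using lamMin_mul_dotProduct_le hM.1 y
  -- `‖x - λy‖² ≥ 0` and `λ‖y‖² ≤ xᵀy` give `‖x‖² ≥ λ xᵀy`
  have hsq : 0 ≤ (x - lamMin M • y) ⬝ᵥ (x - lamMin M • y) := dotProduct_self_star_nonneg _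
  simp only [sub_dotProduct, dotProduct_sub, smul_dotProduct, dotProduct_smul, smul_eq_mul,
    dotProduct_comm y x] at hsq
  rw [le_div_iff₀ hlam]
  nlinarith [mul_le_mul_of_nonneg_left hrayleigh hlam.le]

theorem dotProduct_inv_mulVec_sub_mem_Icc {A B : Matrix (Fin n) (Fin n) ℝ}
    (hA : A.PosDef) (hB : B.PosDef) (hlamA : 0 < lamMin A) (hlamB : 0 < lamMin B)
    {C r : ℝ} (hC : 1 / lamMin A + 1 / lamMin B ≤ C) {x : Fin n → ℝ} (hx : x ⬝ᵥ x ≤ r) :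
    x ⬝ᵥ A⁻¹ *ᵥ x - x ⬝ᵥ B⁻¹ *ᵥ x ∈ Set.Icc (-(r / lamMin B)) (-(r / lamMin B) + C * r) := by
  have hr : 0 ≤ r := (dotProduct_self_star_nonneg x).trans hx
  have hA' : x ⬝ᵥ A⁻¹ *ᵥ x ≤ r / lamMin A :=
    (dotProduct_inv_mulVec_le hA hlamA x).trans (div_le_div_of_nonneg_right hx hlamA.le)
  have hB' : x ⬝ᵥ B⁻¹ *ᵥ x ≤ r / lamMin B :=
    (dotProduct_inv_mulVec_le hB hlamB x).trans (div_le_div_of_nonneg_right hx hlamB.le)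
  have hCr : r / lamMin A + r / lamMin B ≤ C * r := by
    simpa [div_eq_mul_one_div r, ← mul_add, mul_comm] using mul_le_mul_of_nonneg_left hC hr
  have hA0 := hA.inv.posSemidef.dotProduct_mulVec_nonneg x
  have hB0 := hB.inv.posSemidef.dotProduct_mulVec_nonneg x
  rw [star_trivial] at hA0 hB0
  constructor <;> linarith

end SmallestEigenvalue

section QuadraticForm

variable {Ω ι : Type*} [MeasurableSpace Ω] {P : Measure Ω}

theorem dotProduct_self_le_of_mem_Icc [Fintype ι] {V : ℝ} {x : ι → ℝ}
    (hx : ∀ i, x i ∈ Set.Icc (-V) V) : x ⬝ᵥ x ≤ Fintype.card ι * V ^ 2 := by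
  calc x ⬝ᵥ x = ∑ i, x i ^ 2 := by simp only [dotProduct, sq]
    _ ≤ ∑ _i : ι, V ^ 2 := Finset.sum_le_sum fun i _ => sq_le_sq' (hx i).1 (hx i).2
    _ = Fintype.card ι * V ^ 2 := by simp

theorem integrable_mul_of_mem_Icc [IsFiniteMeasure P] {X : Ω → ι → ℝ} (hX : Measurable X)
    {V : ℝ} (hbdd : ∀ᵐ ω ∂P, ∀ i, X ω i ∈ Set.Icc (-V) V) (i j : ι) :
    Integrable (fun ω => X ω i * X ω j) P :=
  .of_bound (by fun_prop) (V * V) <| hbdd.mono fun ω hω => by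
    have hi := abs_le.2 (hω i)
    rw [Real.norm_eq_abs, abs_mul]
    exact mul_le_mul hi (abs_le.2 (hω j)) (abs_nonneg _) ((abs_nonneg _).trans hi)

theorem integral_dotProduct_mulVec [Fintype ι] (A S : Matrix ι ι ℝ) {X : Ω → ι → ℝ}
    (hint : ∀ i j, Integrable (fun ω => X ω i * X ω j) P)
    (hcov : ∀ i j, ∫ ω, X ω i * X ω j ∂P = S i j) :
    ∫ ω, X ω ⬝ᵥ A *ᵥ X ω ∂P = (A * Sᵀ).trace := by
  have hexpand : ∀ ω, X ω ⬝ᵥ A *ᵥ X ω = ∑ i, ∑ j, A i j * (X ω i * X ω j) := fun ω => by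
    simp only [dotProduct, mulVec, Finset.mul_sum]
    exact Finset.sum_congr rfl fun i _ => Finset.sum_congr rfl fun j _ => by ring
  calc ∫ ω, X ω ⬝ᵥ A *ᵥ X ω ∂P = ∑ i, ∑ j, A i j * ∫ ω, X ω i * X ω j ∂P := by
        simp_rw [hexpand]
        rw [integral_finsetSum _ fun i _ =>
          integrable_finsetSum _ fun j _ => (hint i j).const_mul (A i j)]
        refine Finset.sum_congr rfl fun i _ => ?_
        rw [integral_finsetSum _ fun j _ => (hint i j).const_mul (A i j)]
        simp only [integral_const_mul]
    _ = (A * Sᵀ).trace := by simp [trace, mul_apply, hcov]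

theorem integral_dotProduct_inv_mulVec_sub [Fintype ι] [DecidableEq ι] {S B : Matrix ι ι ℝ}
    (hS : S.PosDef) {X : Ω → ι → ℝ} (hint : ∀ i j, Integrable (fun ω => X ω i * X ω j) P)
    (hcov : ∀ i j, ∫ ω, X ω i * X ω j ∂P = S i j) :
    ∫ ω, X ω ⬝ᵥ S⁻¹ *ᵥ X ω - X ω ⬝ᵥ B *ᵥ X ω ∂P = Fintype.card ι - (S * B).trace := by
  have hST : Sᵀ = S := by rw [← conjTranspose_eq_transpose_of_trivial, hS.1.eq]
  simp only [← dotProduct_sub, ← sub_mulVec]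
  rw [integral_dotProduct_mulVec _ S hint hcov, hST, sub_mul,
    nonsing_inv_mul _ (isUnit_iff_ne_zero.mpr hS.det_pos.ne'), trace_sub, trace_one,
    trace_mul_comm]

end QuadraticForm

theorem setOf_ciSup_ge_subset_iUnion {Ω ι : Type*} [Finite ι] [Nonempty ι] (f : ι → Ω → ℝ)
    (m : ι → ℝ) (ε : ℝ) :
    {ω | (⨆ t, f t ω) ≥ (⨆ t, m t) + ε} ⊆ ⋃ t, {ω | m t + ε ≤ f t ω} := by
  intro ω hω
  obtain ⟨t, ht⟩ := exists_eq_ciSup_of_finite (f := fun t => f t ω)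
  refine Set.mem_iUnion.2 ⟨t, ?_⟩
  have hm : m t ≤ ⨆ t, m t := le_ciSup (Set.finite_range m).bddAbove t
  simp only [Set.mem_ofPred_eq, ← ht] at hω ⊢
  linarith

theorem measure_sub_trace_add_le_dotProduct_inv_mulVec_sub {Ω : Type*} [MeasurableSpace Ω]
    {P : Measure Ω} [IsProbabilityMeasure P] {n : ℕ} [NeZero n] {X : Ω → Fin n → ℝ}
    (hX : Measurable X) {V : ℝ} (hV : 0 < V) (hbdd : ∀ᵐ ω ∂P, ∀ i, X ω i ∈ Set.Icc (-V) V)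
    {S B : Matrix (Fin n) (Fin n) ℝ} (hS : S.PosDef) (hB : B.PosDef)
    (hcov : ∀ i j, ∫ ω, X ω i * X ω j ∂P = S i j)
    {C : ℝ} (hC : 1 / lamMin S + 1 / lamMin B ≤ C) {L : ℝ} (hL : 0 ≤ L) :
    P {ω | n - (S * B⁻¹).trace + C * V ^ 2 * n * √(0.5 * L)
        ≤ X ω ⬝ᵥ S⁻¹ *ᵥ X ω - X ω ⬝ᵥ B⁻¹ *ᵥ X ω} ≤ ENNReal.ofReal (exp (-L)) := by
  have hC0 : 0 < C :=
    (add_pos (one_div_pos.2 (lamMin_pos hS)) (one_div_pos.2 (lamMin_pos hB))).trans_le hC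
  have hn : (0 : ℝ) < n := by simp [Nat.pos_of_neZero]
  have hintegral : ∫ ω, X ω ⬝ᵥ S⁻¹ *ᵥ X ω - X ω ⬝ᵥ B⁻¹ *ᵥ X ω ∂P = n - (S * B⁻¹).trace := by
    rw [integral_dotProduct_inv_mulVec_sub hS (integrable_mul_of_mem_Icc hX hbdd) hcov,
      Fintype.card_fin]
  rw [← hintegral]
  refine measure_integral_add_mul_sqrt_le_of_mem_Icc (a := -(n * V ^ 2 / lamMin B)) (by fun_prop)
    (by positivity) (hbdd.mono fun ω hω => ?_) hL
  convert dotProduct_inv_mulVec_sub_mem_Icc hS hB (lamMin_pos hS) (lamMin_pos hB) hC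
    (by simpa using dotProduct_self_le_of_mem_Icc hω) using 2
  ring

theorem glrt_type_one_error_general
    {Ω : Type*} [MeasurableSpace Ω] (P : Measure Ω) [IsProbabilityMeasure P]
    {n : ℕ} (hn : 1 ≤ n) (δ V : ℝ) (hδ : δ ∈ Set.Ioo (0 : ℝ) 1) (hV : 0 < V)
    (S : Matrix (Fin n) (Fin n) ℝ) (hS : S.PosDef)
    (S' : Fin n → Matrix (Fin n) (Fin n) ℝ) (hS' : ∀ t, (S' t).PosDef)
    (C₀ : ℝ) (hC₀ : ∀ t, 1 / lamMin S + 1 / lamMin (S' t) ≤ C₀)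
    (X : Ω → Fin n → ℝ) (hX : Measurable X)
    (hcov : ∀ i j, ∫ ω, X ω i * X ω j ∂P = S i j)
    (hbdd : ∀ᵐ ω ∂P, ∀ i, X ω i ∈ Set.Icc (-V) V) :
    P {ω | (⨆ t : Fin n, (X ω ⬝ᵥ S⁻¹.mulVec (X ω) - X ω ⬝ᵥ (S' t)⁻¹.mulVec (X ω)
            + Real.log (S.det / (S' t).det)))
          ≥ (⨆ t : Fin n, ((n : ℝ) - (S * (S' t)⁻¹).trace + Real.log (S.det / (S' t).det)))
            + C₀ * V ^ 2 * n * Real.sqrt (0.5 * Real.log (2 * n / δ))}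
      ≤ ENNReal.ofReal (δ / 2) := by
  obtain ⟨hδ0, hδ1⟩ := hδ
  have : NeZero n := ⟨by omega⟩
  have hn' : (1 : ℝ) ≤ n := Nat.one_le_cast.2 hn
  have hL : 0 ≤ log (2 * n / δ) := log_nonneg ((one_le_div hδ0).2 (by linarith))
  calc _ ≤ P (⋃ t, {ω | (n - (S * (S' t)⁻¹).trace + log (S.det / (S' t).det))
          + C₀ * V ^ 2 * n * √(0.5 * log (2 * n / δ))
          ≤ X ω ⬝ᵥ S⁻¹ *ᵥ X ω - X ω ⬝ᵥ (S' t)⁻¹ *ᵥ X ω + log (S.det / (S' t).det)}) :=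
        measure_mono (setOf_ciSup_ge_subset_iUnion _ _ _)
    _ ≤ ∑ _t : Fin n, ENNReal.ofReal (exp (-log (2 * n / δ))) := by
        refine (measure_iUnion_fintype_le _ _).trans (Finset.sum_le_sum fun t _ => ?_)
        refine (measure_mono fun ω hω => ?_).trans
          (measure_sub_trace_add_le_dotProduct_inv_mulVec_sub hX hV hbdd hS (hS' t) hcov (hC₀ t) hL)
        simp only [Set.mem_ofPred_eq] at hω ⊢
        linarith
    _ = ENNReal.ofReal (δ / 2) := by
        rw [exp_neg, exp_log (by positivity), inv_div, Finset.sum_const, Finset.card_univ,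
          Fintype.card_fin, nsmul_eq_mul, ← ENNReal.ofReal_natCast,
          ← ENNReal.ofReal_mul (by positivity)]
        congr 1
        field_simp

/-- **Lemma 3 of the paper.** Under the null hypothesis (mean `0`, covariance `Σ`, entries
a.s. bounded by `V`), the generalized likelihood ratio `2𝔏 = max_t Z_t` with
`Z_t = XᵀΣ⁻¹X − Xᵀ(Σ'_t)⁻¹X + ln(det Σ / det Σ'_t)` exceeds the threshold
`max_t (n − Tr(Σ(Σ'_t)⁻¹) + ln(det Σ / det Σ'_t)) + C₀V²n√(0.5 ln(2n/δ))`
with probability at most `δ/2`. -/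
theorem glrt_type_one_error
    {Ω : Type*} [MeasurableSpace Ω] (P : Measure Ω) [IsProbabilityMeasure P]
    {n : ℕ} (hn : 1 ≤ n) (δ V : ℝ) (hδ : δ ∈ Set.Ioo (0 : ℝ) 1) (hV : 0 < V)
    (S : Matrix (Fin n) (Fin n) ℝ) (hS : S.PosDef)
    (S' : Fin n → Matrix (Fin n) (Fin n) ℝ) (hS' : ∀ t, (S' t).PosDef)
    (C₀ : ℝ) (hC₀ : ∀ t, 1 / lamMin S + 1 / lamMin (S' t) ≤ C₀)
    (X : Ω → Fin n → ℝ) (hX : Measurable X)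
    (hmean : ∀ i, ∫ ω, X ω i ∂P = 0)
    (hcov : ∀ i j, ∫ ω, X ω i * X ω j ∂P = S i j)
    (hbdd : ∀ᵐ ω ∂P, ∀ i, X ω i ∈ Set.Icc (-V) V) :
    P {ω | (⨆ t : Fin n, (X ω ⬝ᵥ S⁻¹.mulVec (X ω) - X ω ⬝ᵥ (S' t)⁻¹.mulVec (X ω)
            + Real.log (S.det / (S' t).det)))
          ≥ (⨆ t : Fin n, ((n : ℝ) - (S * (S' t)⁻¹).trace + Real.log (S.det / (S' t).det)))
            + C₀ * V ^ 2 * n * Real.sqrt (0.5 * Real.log (2 * n / δ))}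
      ≤ ENNReal.ofReal (δ / 2) :=
  glrt_type_one_error_general P hn δ V hδ hV S hS S' hS' C₀ hC₀ X hX hcov hbdd
end

section
/- Let t ≥ 1 be an integer, let δ₀, δ₁ ∈ (0, 1), and let 0 < ε_L < ε_U be reals. Let a ∈ ℝ and c₀, c₁, …, c_{t−1} ∈ ℝ with c₀ = a, and suppose that either ε_L ≤ a − c_r ≤ ε_U for all r ∈ {1, …, t−1}, or −ε_U ≤ a − c_r ≤ −ε_L for all r ∈ {1, …, t−1}. Let p₀, …, p_{t−1} ≥ 0 with ∑_{r=0}^{t−1} p_r = 1, and set α₀ = 1 − p₀ and E_BO = ∑_{r=0}^{t−1} c_r p_r. Let p'₁, …, p'_{t−1} ≥ 0 with ∑_{r=1}^{t−1} p'_r = 1, and set E' = ∑_{r=1}^{t−1} c_r p'_r. If ε_U / ε_L ≤ α₀ (1 + (1−δ₀)(1−δ₁)/(δ₀ δ₁)), then |a − E_BO| ≥ (1−δ₀)(1−δ₁)·0 + δ₀ δ₁ · |a − E'| + (1 − (1−δ₀)(1−δ₁) − δ₀ δ₁) · |a − E_BO|. -/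
/-!
Since `c 0 = a`, the BOCPD error `a - E_BO` is the `p`-weighted sum of the gaps `a - c r` over
`r ≥ 1`, and these gaps all have the same sign and size at least `εL`, so
`|a - E_BO| ≥ (1 - p 0) εL`. The CBOCPD error under no confirmed change is a `p'`-average of the same
gaps, so `|a - E'| ≤ εU`. The claim is `δ₀δ₁ |a - E'| ≤ ((1-δ₀)(1-δ₁) + δ₀δ₁) |a - E_BO|`, and the
ratio hypothesis is exactly `δ₀δ₁ εU ≤ ((1-δ₀)(1-δ₁) + δ₀δ₁) (1 - p 0) εL`.
-/

open Finset

section WeightedSums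

variable {ι : Type*} {s : Finset ι} {f w : ι → ℝ}

theorem sub_sum_mul_eq_sum_sub_mul (a : ℝ) (c : ι → ℝ) (hw : ∑ i ∈ s, w i = 1) :
    a - ∑ i ∈ s, c i * w i = ∑ i ∈ s, (a - c i) * w i := by
  simp only [sub_mul, sum_sub_distrib, ← mul_sum, hw, mul_one]

theorem mul_sum_le_abs_sum_mul {ε : ℝ} (hw : ∀ i ∈ s, 0 ≤ w i)
    (hf : (∀ i ∈ s, ε ≤ f i) ∨ (∀ i ∈ s, f i ≤ -ε)) :
    ε * ∑ i ∈ s, w i ≤ |∑ i ∈ s, f i * w i| := by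
  rcases hf with hf | hf
  · calc ε * ∑ i ∈ s, w i = ∑ i ∈ s, ε * w i := mul_sum _ _ _
      _ ≤ ∑ i ∈ s, f i * w i :=
          sum_le_sum fun i hi => mul_le_mul_of_nonneg_right (hf i hi) (hw i hi)
      _ ≤ _ := le_abs_self _
  · have : ∑ i ∈ s, f i * w i ≤ -ε * ∑ i ∈ s, w i := by
      rw [mul_sum]
      exact sum_le_sum fun i hi => mul_le_mul_of_nonneg_right (hf i hi) (hw i hi)
    linarith [neg_le_abs (∑ i ∈ s, f i * w i)]

theorem abs_sum_mul_le {ε : ℝ} (hw : ∀ i ∈ s, 0 ≤ w i) (hf : ∀ i ∈ s, |f i| ≤ ε) :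
    |∑ i ∈ s, f i * w i| ≤ ε * ∑ i ∈ s, w i :=
  calc |∑ i ∈ s, f i * w i| ≤ ∑ i ∈ s, |f i| * w i := by
        refine (abs_sum_le_sum_abs _ _).trans_eq (sum_congr rfl fun i hi => ?_)
        rw [abs_mul, abs_of_nonneg (hw i hi)]
    _ ≤ ∑ i ∈ s, ε * w i :=
        sum_le_sum fun i hi => mul_le_mul_of_nonneg_right (hf i hi) (hw i hi)
    _ = ε * ∑ i ∈ s, w i := (mul_sum _ _ _).symm

end WeightedSums

theorem sum_Ico_one_eq_one_sub {t : ℕ} {p : ℕ → ℝ} (hp : ∑ r ∈ range t, p r = 1) :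
    ∑ r ∈ Ico 1 t, p r = 1 - p 0 := by
  have ht : 0 < t := Nat.pos_of_ne_zero (by rintro rfl; simp at hp)
  rw [sum_range_eq_add_Ico p ht] at hp
  linarith

theorem mul_le_add_mul_of_div_le_mul {A B α εL εU X Y : ℝ} (hB : 0 < B) (hAB : 0 ≤ A + B)
    (hεL : 0 < εL) (hratio : εU / εL ≤ α * (1 + A / B)) (hX : α * εL ≤ X) (hY : Y ≤ εU) :
    B * Y ≤ (A + B) * X :=
  calc B * Y ≤ B * εU := mul_le_mul_of_nonneg_left hY hB.le
    _ ≤ B * (α * (1 + A / B) * εL) := mul_le_mul_of_nonneg_left ((div_le_iff₀ hεL).1 hratio) hB.le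
    _ = (A + B) * (α * εL) := by field_simp; ring
    _ ≤ (A + B) * X := mul_le_mul_of_nonneg_left hX hAB

theorem cbocpd_gain_nonstationary_general
    (t : ℕ) (δ₀ δ₁ : ℝ) (hδ₀ : δ₀ ∈ Set.Ioo (0 : ℝ) 1) (hδ₁ : δ₁ ∈ Set.Ioo (0 : ℝ) 1)
    (εL εU : ℝ) (hεL : 0 < εL)
    (a : ℝ) (c : ℕ → ℝ) (hc0 : c 0 = a)
    (hcase :
      (∀ r ∈ Finset.Ico 1 t, -εU ≤ a - c r ∧ a - c r ≤ -εL) ∨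
      (∀ r ∈ Finset.Ico 1 t, εL ≤ a - c r ∧ a - c r ≤ εU))
    (p : ℕ → ℝ) (hp : ∀ r ∈ Finset.range t, 0 ≤ p r)
    (hpsum : ∑ r ∈ Finset.range t, p r = 1)
    (p' : ℕ → ℝ) (hp' : ∀ r ∈ Finset.Ico 1 t, 0 ≤ p' r)
    (hp'sum : ∑ r ∈ Finset.Ico 1 t, p' r = 1)
    (hratio : εU / εL ≤ (1 - p 0) * (1 + (1 - δ₀) * (1 - δ₁) / (δ₀ * δ₁))) :
    |a - ∑ r ∈ Finset.range t, c r * p r| ≥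
      (1 - δ₀) * (1 - δ₁) * 0
        + δ₀ * δ₁ * |a - ∑ r ∈ Finset.Ico 1 t, c r * p' r|
        + (1 - (1 - δ₀) * (1 - δ₁) - δ₀ * δ₁) * |a - ∑ r ∈ Finset.range t, c r * p r| := by
  obtain ⟨hδ₀0, hδ₀1⟩ := hδ₀
  obtain ⟨hδ₁0, hδ₁1⟩ := hδ₁
  have hIco : Ico 1 t ⊆ range t := fun r hr => mem_range.2 (mem_Ico.1 hr).2
  have hBO : a - ∑ r ∈ range t, c r * p r = ∑ r ∈ Ico 1 t, (a - c r) * p r := by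
    rw [sub_sum_mul_eq_sum_sub_mul a c hpsum]
    refine (sum_subset hIco fun r hr hr' => ?_).symm
    obtain rfl : r = 0 := by simp_all
    simp [hc0]
  have hBO_lower : (1 - p 0) * εL ≤ |a - ∑ r ∈ range t, c r * p r| := by
    rw [hBO, mul_comm, ← sum_Ico_one_eq_one_sub hpsum]
    exact mul_sum_le_abs_sum_mul (fun r hr => hp r (hIco hr))
      (hcase.symm.imp (fun h r hr => (h r hr).1) (fun h r hr => (h r hr).2))
  have hCBO_upper : |a - ∑ r ∈ Ico 1 t, c r * p' r| ≤ εU := by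
    rw [sub_sum_mul_eq_sum_sub_mul a c hp'sum]
    refine (abs_sum_mul_le hp' fun r hr => ?_).trans_eq (by rw [hp'sum, mul_one])
    rcases hcase with h | h <;> obtain ⟨h₁, h₂⟩ := h r hr <;>
      exact abs_le.2 ⟨by linarith, by linarith⟩
  have hweight : 0 ≤ (1 - δ₀) * (1 - δ₁) + δ₀ * δ₁ :=
    add_nonneg (mul_nonneg (by linarith) (by linarith)) (mul_pos hδ₀0 hδ₁0).le
  have := mul_le_add_mul_of_div_le_mul (mul_pos hδ₀0 hδ₁0) hweight hεL hratio
    hBO_lower hCBO_upper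
  linarith

/-- **Theorem 4 of the paper (non-stationary case), in explicit form.**
At a change point, with prior prediction `a = E[x_t | ∅]`, run-length predictive means `c r`,
BOCPD run-length posterior `p` (with `α₀ = 1 - p 0`) and CBOCPD posterior `p'` used when the
change is not confirmed, if `εU / εL ≤ α₀ (1 + (1-δ₀)(1-δ₁)/(δ₀δ₁))` then the expected absolute
prediction error of CBOCPD at the change point is at most that of BOCPD. -/
theorem cbocpd_gain_nonstationary
    (t : ℕ) (ht : 1 ≤ t) (δ₀ δ₁ : ℝ) (hδ₀ : δ₀ ∈ Set.Ioo (0 : ℝ) 1) (hδ₁ : δ₁ ∈ Set.Ioo (0 : ℝ) 1)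
    (εL εU : ℝ) (hεL : 0 < εL) (hεLU : εL < εU)
    (a : ℝ) (c : ℕ → ℝ) (hc0 : c 0 = a)
    (hcase :
      (∀ r ∈ Finset.Ico 1 t, -εU ≤ a - c r ∧ a - c r ≤ -εL) ∨
      (∀ r ∈ Finset.Ico 1 t, εL ≤ a - c r ∧ a - c r ≤ εU))
    (p : ℕ → ℝ) (hp : ∀ r ∈ Finset.range t, 0 ≤ p r)
    (hpsum : ∑ r ∈ Finset.range t, p r = 1)
    (p' : ℕ → ℝ) (hp' : ∀ r ∈ Finset.Ico 1 t, 0 ≤ p' r)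
    (hp'sum : ∑ r ∈ Finset.Ico 1 t, p' r = 1)
    (hratio : εU / εL ≤ (1 - p 0) * (1 + (1 - δ₀) * (1 - δ₁) / (δ₀ * δ₁))) :
    |a - ∑ r ∈ Finset.range t, c r * p r| ≥
      (1 - δ₀) * (1 - δ₁) * 0
        + δ₀ * δ₁ * |a - ∑ r ∈ Finset.Ico 1 t, c r * p' r|
        + (1 - (1 - δ₀) * (1 - δ₁) - δ₀ * δ₁) * |a - ∑ r ∈ Finset.range t, c r * p r| :=
  cbocpd_gain_nonstationary_general t δ₀ δ₁ hδ₀ hδ₁ εL εU hεL a c hc0 hcase p hp hpsum p' hp' hp'sum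
    hratio
end

section
/- Let t ≥ 2 be an integer, let δ₀, δ₁ ∈ (0, 1), and let 0 < ε_L < ε_U be reals. Let m, a ∈ ℝ and c₀, c₁, …, c_{t−1} ∈ ℝ with c₀ = a and c_{t−1} = m, and suppose that either ε_L ≤ m − c_r ≤ ε_U for all r ∈ {0, …, t−2}, or −ε_U ≤ m − c_r ≤ −ε_L for all r ∈ {0, …, t−2}. Let p₀, …, p_{t−1} ≥ 0 with ∑_{r=0}^{t−1} p_r = 1, and set α = 1 − p_{t−1} and E_BO = ∑_{r=0}^{t−1} c_r p_r. Let p'₁, …, p'_{t−1} ≥ 0 with ∑_{r=1}^{t−1} p'_r = 1, and set β = 1 − p'_{t−1} and E' = ∑_{r=1}^{t−1} c_r p'_r. If ε_U / ε_L ≤ α ((1−δ₀)(1−δ₁) + δ₀δ₁) / (β (1−δ₀)(1−δ₁) + δ₀δ₁), then |m − E_BO| ≥ δ₀δ₁ · |m − a| + (1−δ₀)(1−δ₁) · |m − E'| + (1 − δ₀δ₁ − (1−δ₀)(1−δ₁)) · |m − E_BO|. -/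
/-!
Write `e r = m - c r`. Because `c (t-1) = m`, both prediction errors are weighted sums of `e`
over the run lengths `r < t - 1`, with total weight `α` for BOCPD and `β` for CBOCPD. When all
these `e r` share one sign and satisfy `εL ≤ |e r| ≤ εU`, the BOCPD error is at least `εL α`,
while the CBOCPD error is at most `εU β` and the error of the prior prediction at most `εU`.
The ratio hypothesis is exactly what makes the mixture `δ₀δ₁ εU + (1-δ₀)(1-δ₁) εU β` of the
latter two bounds at most `((1-δ₀)(1-δ₁) + δ₀δ₁) εL α`.
-/

open Finset

section SignedBand

variable {ι 𝕜 : Type*} [CommRing 𝕜] [LinearOrder 𝕜] {εL εU : 𝕜} {s t : Finset ι} {e w : ι → 𝕜}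

def SignedBand (εL εU : 𝕜) (s : Finset ι) (e : ι → 𝕜) : Prop :=
  (∀ r ∈ s, εL ≤ e r ∧ e r ≤ εU) ∨ (∀ r ∈ s, -εU ≤ e r ∧ e r ≤ -εL)

theorem SignedBand.mono (h : SignedBand εL εU t e) (hst : s ⊆ t) : SignedBand εL εU s e :=
  h.imp (fun h r hr => h r (hst hr)) (fun h r hr => h r (hst hr))

variable [IsStrictOrderedRing 𝕜]

theorem SignedBand.abs_le (h : SignedBand εL εU s e) (hεL : 0 ≤ εL) {r : ι} (hr : r ∈ s) :
    |e r| ≤ εU := by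
  rcases h with h | h <;> obtain ⟨hlo, hhi⟩ := h r hr <;> rw [_root_.abs_le] <;> constructor <;> linarith

theorem SignedBand.abs_sum_mul_le (h : SignedBand εL εU s e) (hεL : 0 ≤ εL)
    (hw : ∀ r ∈ s, 0 ≤ w r) : |∑ r ∈ s, e r * w r| ≤ εU * ∑ r ∈ s, w r :=
  calc |∑ r ∈ s, e r * w r| ≤ ∑ r ∈ s, |e r| * w r := by
        refine (abs_sum_le_sum_abs _ _).trans (sum_le_sum fun r hr => ?_)
        rw [abs_mul, abs_of_nonneg (hw r hr)]
    _ ≤ εU * ∑ r ∈ s, w r := by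
        rw [mul_sum]
        exact sum_le_sum fun r hr => mul_le_mul_of_nonneg_right (h.abs_le hεL hr) (hw r hr)

theorem SignedBand.mul_sum_le_abs_sum_mul (h : SignedBand εL εU s e) (hw : ∀ r ∈ s, 0 ≤ w r) :
    εL * ∑ r ∈ s, w r ≤ |∑ r ∈ s, e r * w r| := by
  rw [mul_sum]
  rcases h with h | h
  · calc ∑ r ∈ s, εL * w r ≤ ∑ r ∈ s, e r * w r :=
          sum_le_sum fun r hr => mul_le_mul_of_nonneg_right (h r hr).1 (hw r hr)
      _ ≤ _ := le_abs_self _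
  · calc ∑ r ∈ s, εL * w r ≤ -∑ r ∈ s, e r * w r := by
          rw [← sum_neg_distrib]
          exact sum_le_sum fun r hr => by nlinarith [(h r hr).2, hw r hr]
      _ ≤ _ := neg_le_abs _

end SignedBand

section WeightedMean

variable {ι 𝕜 : Type*} [CommRing 𝕜] [DecidableEq ι] {s : Finset ι} {i : ι} {c w : ι → 𝕜}

theorem sum_eq_one_sub_of_sum_insert_eq_one (hi : i ∉ s) (hw : ∑ r ∈ insert i s, w r = 1) :
    ∑ r ∈ s, w r = 1 - w i := by
  rw [sum_insert hi] at hw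
  exact eq_sub_of_add_eq' hw

theorem sub_sum_insert_mul_eq_sum_sub_mul (hi : i ∉ s) (hw : ∑ r ∈ insert i s, w r = 1)
    {m : 𝕜} (hci : c i = m) :
    m - ∑ r ∈ insert i s, c r * w r = ∑ r ∈ s, (m - c r) * w r := by
  simp only [sub_mul, sum_sub_distrib, ← mul_sum, sum_eq_one_sub_of_sum_insert_eq_one hi hw,
    sum_insert hi, hci]
  ring

end WeightedMean

theorem mixture_le_of_div_le_div {𝕜 : Type*} [Field 𝕜] [LinearOrder 𝕜] [IsStrictOrderedRing 𝕜]
    {D K A X Y α β εL εU : 𝕜} (hD : 0 < D) (hK : 0 ≤ K) (hβ : 0 ≤ β) (hεL : 0 < εL)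
    (hA : A ≤ εU) (hY : Y ≤ εU * β) (hX : εL * α ≤ X)
    (hratio : εU / εL ≤ α * (K + D) / (β * K + D)) :
    D * A + K * Y + (1 - D - K) * X ≤ X := by
  rw [div_le_div_iff₀ hεL (by positivity)] at hratio
  have hmix : D * A + K * Y ≤ (K + D) * X :=
    calc D * A + K * Y ≤ εU * (β * K + D) := by
          nlinarith [mul_le_mul_of_nonneg_left hA hD.le, mul_le_mul_of_nonneg_left hY hK]
      _ ≤ (K + D) * (εL * α) := by linarith
      _ ≤ (K + D) * X := mul_le_mul_of_nonneg_left hX (by positivity)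
  linarith

theorem cbocpd_gain_stationary_general
    (t : ℕ) (ht : 2 ≤ t) (δ₀ δ₁ : ℝ) (hδ₀ : δ₀ ∈ Set.Ioo (0 : ℝ) 1) (hδ₁ : δ₁ ∈ Set.Ioo (0 : ℝ) 1)
    (εL εU : ℝ) (hεL : 0 < εL)
    (m a : ℝ) (c : ℕ → ℝ) (hc0 : c 0 = a) (hct : c (t - 1) = m)
    (hcase :
      (∀ r ∈ Finset.range (t - 1), εL ≤ m - c r ∧ m - c r ≤ εU) ∨
      (∀ r ∈ Finset.range (t - 1), -εU ≤ m - c r ∧ m - c r ≤ -εL))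
    (p : ℕ → ℝ) (hp : ∀ r ∈ Finset.range t, 0 ≤ p r)
    (hpsum : ∑ r ∈ Finset.range t, p r = 1)
    (p' : ℕ → ℝ) (hp' : ∀ r ∈ Finset.Ico 1 t, 0 ≤ p' r)
    (hp'sum : ∑ r ∈ Finset.Ico 1 t, p' r = 1)
    (hratio : εU / εL ≤
      (1 - p (t - 1)) * ((1 - δ₀) * (1 - δ₁) + δ₀ * δ₁) /
        ((1 - p' (t - 1)) * ((1 - δ₀) * (1 - δ₁)) + δ₀ * δ₁)) :
    |m - ∑ r ∈ Finset.range t, c r * p r| ≥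
      δ₀ * δ₁ * |m - a|
        + (1 - δ₀) * (1 - δ₁) * |m - ∑ r ∈ Finset.Ico 1 t, c r * p' r|
        + (1 - δ₀ * δ₁ - (1 - δ₀) * (1 - δ₁)) * |m - ∑ r ∈ Finset.range t, c r * p r| := by
  obtain ⟨hδ₀0, hδ₀1⟩ := hδ₀
  obtain ⟨hδ₁0, hδ₁1⟩ := hδ₁
  have hband : SignedBand εL εU (range (t - 1)) (fun r => m - c r) := hcase
  have hrange : range t = insert (t - 1) (range (t - 1)) := by
    rw [← range_add_one, Nat.sub_add_cancel (by omega)]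
  have hIco : Ico 1 t = insert (t - 1) (Ico 1 (t - 1)) := by
    rw [← Nat.Ico_succ_right_eq_insert_Ico (by omega), Nat.succ_eq_add_one,
      Nat.sub_add_cancel (by omega)]
  rw [hrange] at hp hpsum ⊢
  rw [hIco] at hp' hp'sum ⊢
  have hα := sum_eq_one_sub_of_sum_insert_eq_one (by simp) hpsum
  have hβ := sum_eq_one_sub_of_sum_insert_eq_one (by simp) hp'sum
  have hBO := hband.mul_sum_le_abs_sum_mul fun r hr => hp r (mem_insert_of_mem hr)
  have hCBO := (hband.mono fun r hr => mem_range.2 (mem_Ico.1 hr).2).abs_sum_mul_le hεL.le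
    fun r hr => hp' r (mem_insert_of_mem hr)
  rw [hα, ← sub_sum_insert_mul_eq_sum_sub_mul (by simp) hpsum hct] at hBO
  rw [hβ, ← sub_sum_insert_mul_eq_sum_sub_mul (by simp) hp'sum hct] at hCBO
  have hprior : |m - a| ≤ εU := hc0 ▸ hband.abs_le hεL.le (mem_range.2 (by omega))
  have hβ0 : 0 ≤ 1 - p' (t - 1) :=
    hβ ▸ sum_nonneg fun r hr => hp' r (mem_insert_of_mem hr)
  exact mixture_le_of_div_le_div (mul_pos hδ₀0 hδ₁0) (mul_nonneg (by linarith) (by linarith))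
    hβ0 hεL hprior hCBO hBO hratio

/-- **Theorem 5 of the paper (stationary case), in explicit form.**
At a confirmed non-change point, with true predictive mean `m = c (t-1) = E[x_t | x_{1:t-1}]`,
prior prediction `a = c 0`, BOCPD run-length posterior `p` (with `α = 1 - p (t-1)`) and CBOCPD
posterior `p'` (with `β = 1 - p' (t-1)`), if
`εU / εL ≤ α((1-δ₀)(1-δ₁) + δ₀δ₁) / (β(1-δ₀)(1-δ₁) + δ₀δ₁)` then the expected absolute
prediction error of CBOCPD is at most that of BOCPD. -/
theorem cbocpd_gain_stationary
    (t : ℕ) (ht : 2 ≤ t) (δ₀ δ₁ : ℝ) (hδ₀ : δ₀ ∈ Set.Ioo (0 : ℝ) 1) (hδ₁ : δ₁ ∈ Set.Ioo (0 : ℝ) 1)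
    (εL εU : ℝ) (hεL : 0 < εL) (hεLU : εL < εU)
    (m a : ℝ) (c : ℕ → ℝ) (hc0 : c 0 = a) (hct : c (t - 1) = m)
    (hcase :
      (∀ r ∈ Finset.range (t - 1), εL ≤ m - c r ∧ m - c r ≤ εU) ∨
      (∀ r ∈ Finset.range (t - 1), -εU ≤ m - c r ∧ m - c r ≤ -εL))
    (p : ℕ → ℝ) (hp : ∀ r ∈ Finset.range t, 0 ≤ p r)
    (hpsum : ∑ r ∈ Finset.range t, p r = 1)
    (p' : ℕ → ℝ) (hp' : ∀ r ∈ Finset.Ico 1 t, 0 ≤ p' r)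
    (hp'sum : ∑ r ∈ Finset.Ico 1 t, p' r = 1)
    (hratio : εU / εL ≤
      (1 - p (t - 1)) * ((1 - δ₀) * (1 - δ₁) + δ₀ * δ₁) /
        ((1 - p' (t - 1)) * ((1 - δ₀) * (1 - δ₁)) + δ₀ * δ₁)) :
    |m - ∑ r ∈ Finset.range t, c r * p r| ≥
      δ₀ * δ₁ * |m - a|
        + (1 - δ₀) * (1 - δ₁) * |m - ∑ r ∈ Finset.Ico 1 t, c r * p' r|
        + (1 - δ₀ * δ₁ - (1 - δ₀) * (1 - δ₁)) * |m - ∑ r ∈ Finset.range t, c r * p r| :=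
  cbocpd_gain_stationary_general t ht δ₀ δ₁ hδ₀ hδ₁ εL εU hεL m a c hc0 hct hcase p hp hpsum p' hp'
    hp'sum hratio
end
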